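/- Let T = [[α, β],[β*, δ]] be a nonnegative bounded operator on X ⊕ U with minimal contraction γ. Then the Schur complement Δ = α^{1/2}(I − γ*γ)α^{1/2} is zero if and only if γ is a partial isometry with initial space equal to the closure of the range of α. -/

import Mathlib

/-!
With `s = α^{1/2}` selfadjoint, `Δ = s*s - (γ s)*(γ s)`, so `Δ = 0` iff `‖γ (s z)‖ = ‖s z‖` for
all `z`, i.e. `γ` is isometric on the range of `s` and hence on its closure. That closure is the
closure of the range of `α`, because `ker s = ker α`. The orthogonal complement of the range of `α`
is `ker α ⊆ ker γ`, so `γ` vanishes there regardless of `Δ`.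
-/

/-- The 2×2 block operator `[[a, b],[c, d]] : X ⊕ U → X ⊕ Y` between Hilbert space
orthogonal direct sums. -/
noncomputable def blk {X U Y : Type*}
    [NormedAddCommGroup X] [InnerProductSpace ℂ X] [CompleteSpace X]
    [NormedAddCommGroup U] [InnerProductSpace ℂ U] [CompleteSpace U]
    [NormedAddCommGroup Y] [InnerProductSpace ℂ Y] [CompleteSpace Y]
    (a : X →L[ℂ] X) (b : U →L[ℂ] X) (c : X →L[ℂ] Y) (d : U →L[ℂ] Y) :
    WithLp 2 (X × U) →L[ℂ] WithLp 2 (X × Y) :=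
  ((WithLp.prodContinuousLinearEquiv 2 ℂ X Y).symm : (X × Y) →L[ℂ] WithLp 2 (X × Y)).comp
    ((((a.comp (ContinuousLinearMap.fst ℂ X U)) + (b.comp (ContinuousLinearMap.snd ℂ X U))).prod
      ((c.comp (ContinuousLinearMap.fst ℂ X U)) + (d.comp (ContinuousLinearMap.snd ℂ X U)))).comp
      ((WithLp.prodContinuousLinearEquiv 2 ℂ X U) : WithLp 2 (X × U) →L[ℂ] (X × U)))

open ContinuousLinearMap

theorem ContinuousLinearMap.norm_map_eq_norm_map_iff_adjoint_comp_self_eq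
    {𝕜 H K K' : Type*} [RCLike 𝕜]
    [NormedAddCommGroup H] [InnerProductSpace 𝕜 H] [CompleteSpace H]
    [NormedAddCommGroup K] [InnerProductSpace 𝕜 K] [CompleteSpace K]
    [NormedAddCommGroup K'] [InnerProductSpace 𝕜 K'] [CompleteSpace K']
    (u : H →L[𝕜] K) (v : H →L[𝕜] K') :
    (∀ x, ‖u x‖ = ‖v x‖) ↔ adjoint u ∘L u = adjoint v ∘L v := by
  have hsymm : IsSelfAdjoint (adjoint u ∘L u - adjoint v ∘L v) :=
    (isPositive_adjoint_comp_self u).isSelfAdjoint.sub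
      (isPositive_adjoint_comp_self v).isSelfAdjoint
  rw [← sub_eq_zero, ← coe_inj, toLinearMap_zero, ← hsymm.isSymmetric.inner_map_self_eq_zero]
  refine forall_congr' fun x => ?_
  simp only [coe_coe, sub_apply, comp_apply, inner_sub_left, adjoint_inner_left,
    inner_self_eq_norm_sq_to_K, sub_eq_zero]
  norm_cast
  exact (pow_left_inj₀ (norm_nonneg _) (norm_nonneg _) two_ne_zero).symm

section sqrt

variable {X : Type*} [NormedAddCommGroup X] [InnerProductSpace ℂ X] [CompleteSpace X]
  {α : X →L[ℂ] X}

theorem ContinuousLinearMap.ker_sqrt (hα : 0 ≤ α) :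
    LinearMap.ker ((CFC.sqrt α : X →L[ℂ] X) : X →ₗ[ℂ] X) = LinearMap.ker (α : X →ₗ[ℂ] X) := by
  have hs : IsSelfAdjoint (CFC.sqrt α) := (CFC.sqrt_nonneg α).isSelfAdjoint
  have hαs : α = adjoint (CFC.sqrt α) ∘L CFC.sqrt α := by
    rw [hs.adjoint_eq]
    exact (CFC.sqrt_mul_sqrt_self α hα).symm
  conv_rhs => rw [hαs]
  exact (ker_adjoint_comp_self _).symm

theorem ContinuousLinearMap.topologicalClosure_range_sqrt (hα : 0 ≤ α) :
    (LinearMap.range ((CFC.sqrt α : X →L[ℂ] X) : X →ₗ[ℂ] X)).topologicalClosure =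
      (LinearMap.range (α : X →ₗ[ℂ] X)).topologicalClosure := by
  simp only [← Submodule.orthogonal_orthogonal_eq_closure,
    (CFC.sqrt_nonneg α).isSelfAdjoint.isStarNormal.orthogonal_range,
    hα.isSelfAdjoint.isStarNormal.orthogonal_range, ker_sqrt hα]

end sqrt

theorem statement5_general {X U : Type*}
    [NormedAddCommGroup X] [InnerProductSpace ℂ X] [CompleteSpace X]
    [NormedAddCommGroup U] [InnerProductSpace ℂ U] [CompleteSpace U]
    (α : X →L[ℂ] X)
    (hα : α.IsPositive)
    (γ : X →L[ℂ] U)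
    (hγker : LinearMap.ker (α : X →ₗ[ℂ] X) ≤ LinearMap.ker (γ : X →ₗ[ℂ] U)) :
    (CFC.sqrt α).comp ((1 - γ.adjoint.comp γ).comp (CFC.sqrt α)) = 0 ↔
      ((∀ x ∈ (LinearMap.range (α : X →ₗ[ℂ] X)).topologicalClosure, ‖γ x‖ = ‖x‖) ∧
        (∀ x ∈ ((LinearMap.range (α : X →ₗ[ℂ] X)).topologicalClosure)ᗮ, γ x = 0)) := by
  have hα0 : 0 ≤ α := (nonneg_iff_isPositive α).2 hα
  set s : X →L[ℂ] X := CFC.sqrt α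
  have hs : adjoint s = s := (CFC.sqrt_nonneg α).isSelfAdjoint.adjoint_eq
  have hΔ : s ∘L ((1 - adjoint γ ∘L γ) ∘L s) = adjoint s ∘L s - adjoint (γ ∘L s) ∘L (γ ∘L s) := by
    rw [adjoint_comp, hs]
    ext x
    simp
  have hvanish : ∀ x ∈ ((LinearMap.range (α : X →ₗ[ℂ] X)).topologicalClosure)ᗮ, γ x = 0 := by
    rw [Submodule.orthogonal_closure, hα.isSelfAdjoint.isStarNormal.orthogonal_range]
    exact hγker
  have hisometric : (∀ x ∈ (LinearMap.range (α : X →ₗ[ℂ] X)).topologicalClosure, ‖γ x‖ = ‖x‖) ↔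
      ∀ z, ‖s z‖ = ‖(γ ∘L s) z‖ := by
    rw [← topologicalClosure_range_sqrt hα0]
    refine ⟨fun h z => (h _ (Submodule.le_topologicalClosure _ ⟨z, rfl⟩)).symm, fun h => ?_⟩
    have hrange : Set.EqOn (fun x => ‖γ x‖) (fun x => ‖x‖) (Set.range s) := by
      rintro _ ⟨z, rfl⟩
      exact (h z).symm
    exact fun x hx => hrange.closure (by fun_prop) (by fun_prop) hx
  rw [hΔ, sub_eq_zero, ← norm_map_eq_norm_map_iff_adjoint_comp_self_eq, hisometric,
    and_iff_left hvanish]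

/-- Let `T = [[α, β],[β*, δ]]` be a nonnegative bounded operator on `X ⊕ U`
with minimal contraction `γ`. Then the Schur complement `Δ = α^{1/2}(I − γ*γ)α^{1/2}` is zero
iff `γ` is a partial isometry with initial space the closure of the range of `α` (i.e. `γ` is
isometric on that closure and vanishes on its orthogonal complement). -/
theorem statement5 {X U : Type*}
    [NormedAddCommGroup X] [InnerProductSpace ℂ X] [CompleteSpace X]
    [NormedAddCommGroup U] [InnerProductSpace ℂ U] [CompleteSpace U]
    (α : X →L[ℂ] X) (β : U →L[ℂ] X) (δ : U →L[ℂ] U)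
    (hα : α.IsPositive) (hδ : δ.IsPositive)
    (hT : (blk α β β.adjoint δ).IsPositive)
    (γ : X →L[ℂ] U) (hγnorm : ‖γ‖ ≤ 1)
    (hγker : LinearMap.ker (α : X →ₗ[ℂ] X) ≤ LinearMap.ker (γ : X →ₗ[ℂ] U))
    (hγran : LinearMap.range (γ : X →ₗ[ℂ] U) ≤ (LinearMap.range (δ : U →ₗ[ℂ] U)).topologicalClosure)
    (hγfac : β.adjoint = (CFC.sqrt δ).comp (γ.comp (CFC.sqrt α))) :
    (CFC.sqrt α).comp ((1 - γ.adjoint.comp γ).comp (CFC.sqrt α)) = 0 ↔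
      ((∀ x ∈ (LinearMap.range (α : X →ₗ[ℂ] X)).topologicalClosure, ‖γ x‖ = ‖x‖) ∧
        (∀ x ∈ ((LinearMap.range (α : X →ₗ[ℂ] X)).topologicalClosure)ᗮ, γ x = 0)) :=
  statement5_general α hα γ hγker
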